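/- The matrix exponential maps 𝔹_m(ℝ) onto 𝔹_m^*(ℝ) = 𝔹_m(ℝ) ∩ GL(2m, ℝ): exp(𝔹_m(ℝ)) = 𝔹_m^*(ℝ). -/

import Mathlib

open NormedSpace

/-- Membership in `𝕊`: a real 2×2 matrix of the form `[[α, β], [-β, α]]`. -/
def MemS (b : Matrix (Fin 2) (Fin 2) ℝ) : Prop :=
  b 0 0 = b 1 1 ∧ b 1 0 = -(b 0 1)

/-- The `(i,j)` 2×2 block of a `2m × 2m` real matrix indexed by `Fin m × Fin 2`. -/
def blk {m : ℕ} (B : Matrix (Fin m × Fin 2) (Fin m × Fin 2) ℝ) (i j : Fin m) :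
    Matrix (Fin 2) (Fin 2) ℝ :=
  Matrix.of fun a b => B (i, a) (j, b)

/-- Membership in `𝔹_m(ℝ)`: block lower triangular with 2×2 blocks in `𝕊` and all diagonal
blocks equal. -/
def MemB {m : ℕ} (B : Matrix (Fin m × Fin 2) (Fin m × Fin 2) ℝ) : Prop :=
  (∀ i j : Fin m, MemS (blk B i j)) ∧
  (∀ i j : Fin m, i < j → blk B i j = 0) ∧
  (∀ i j : Fin m, blk B i i = blk B j j)

/-!
Realification identifies `𝔹_m(ℝ)` with the algebra of complex lower triangular matrices with
constant diagonal, `c • 1 + N` with `N` strictly lower triangular, and commutes with `exp`.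
Since `exp (c • 1 + N) = exp c • exp N` and `exp N - 1` is again strictly lower triangular,
`exp` maps this algebra into its invertible elements. Conversely an invertible element has
`c ≠ 0`, and `c • (1 + M)` is the exponential of `log c • 1 + L` once `exp L = 1 + M` with `L`
strictly lower triangular. Such an `L` is found by successive approximation along the
filtration by subdiagonals: if `M` vanishes above the `d`-th subdiagonal, then
`exp (-M) * (1 + M) = 1 + r` with `r` vanishing above the `(d + 1)`-th one, and `L = M + L'`
where `exp L' = 1 + r`.
-/

open Matrix Finset

theorem NormedSpace.exp_eq_sum_range_of_pow_eq_zero {𝔸 : Type*} [Ring 𝔸] [Algebra ℚ 𝔸]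
    [TopologicalSpace 𝔸] [IsTopologicalRing 𝔸] {x : 𝔸} {K : ℕ} (hx : x ^ K = 0) :
    exp x = ∑ k ∈ range K, (k.factorial⁻¹ : ℚ) • x ^ k := by
  rw [exp_eq_tsum_rat]
  exact tsum_eq_sum fun k hk => by
    rw [pow_eq_zero_of_le (by simpa using hk) hx, smul_zero]

namespace Matrix

section Semiring

variable (R : Type*) [Semiring R] (m : ℕ)

def belowSubdiag (d : ℕ) : Submodule R (Matrix (Fin m) (Fin m) R) where
  carrier := {M | ∀ i j : Fin m, (i : ℕ) < j + d → M i j = 0}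
  add_mem' hM hN i j hij := by simp [hM i j hij, hN i j hij]
  zero_mem' _ _ _ := rfl
  smul_mem' c M hM i j hij := by simp [hM i j hij]

variable {R m}

theorem belowSubdiag_antitone : Antitone (belowSubdiag R m) :=
  fun _ _ hed _ hM i j hij => hM i j (by omega)

theorem one_mem_belowSubdiag_zero : (1 : Matrix (Fin m) (Fin m) R) ∈ belowSubdiag R m 0 :=
  fun _ _ hij => one_apply_ne (by rintro rfl; omega)

theorem mul_mem_belowSubdiag {a b : ℕ} {M N : Matrix (Fin m) (Fin m) R}
    (hM : M ∈ belowSubdiag R m a) (hN : N ∈ belowSubdiag R m b) :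
    M * N ∈ belowSubdiag R m (a + b) := fun i j hij =>
  (mul_apply ..).trans <| sum_eq_zero fun l _ => by
    by_cases hl : (i : ℕ) < l + a
    · rw [hM i l hl, zero_mul]
    · rw [hN l j (by omega), mul_zero]

theorem pow_mem_belowSubdiag {d : ℕ} {M : Matrix (Fin m) (Fin m) R}
    (hM : M ∈ belowSubdiag R m d) (k : ℕ) : M ^ k ∈ belowSubdiag R m (k * d) := by
  induction k with
  | zero => simpa using one_mem_belowSubdiag_zero
  | succ k ih => simpa [pow_succ, add_mul] using mul_mem_belowSubdiag ih hM

theorem eq_zero_of_mem_belowSubdiag {d : ℕ} {M : Matrix (Fin m) (Fin m) R}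
    (hM : M ∈ belowSubdiag R m d) (hd : m ≤ d) : M = 0 :=
  ext fun i j => hM i j (by omega)

theorem pow_eq_zero_of_mem_belowSubdiag {d : ℕ} {M : Matrix (Fin m) (Fin m) R}
    (hM : M ∈ belowSubdiag R m d) (hd : 0 < d) : M ^ m = 0 :=
  eq_zero_of_mem_belowSubdiag (pow_mem_belowSubdiag hM m) (Nat.le_mul_of_pos_right m hd)

end Semiring

variable {R : Type*} {m : ℕ}

theorem exists_sub_smul_one_mem_belowSubdiag_one_iff [Ring R] {C : Matrix (Fin m) (Fin m) R} :
    (∃ c : R, C - c • 1 ∈ belowSubdiag R m 1) ↔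
      (∀ i j, i < j → C i j = 0) ∧ ∀ i j, C i i = C j j := by
  constructor
  · rintro ⟨c, hc⟩
    have h : ∀ i j : Fin m, i ≤ j → C i j = (c • 1 : Matrix (Fin m) (Fin m) R) i j :=
      fun i j hij => sub_eq_zero.1 (hc i j (by omega))
    exact ⟨fun i j hij => by simpa [one_apply_ne hij.ne] using h i j hij.le,
      fun i j => by simp [h i i le_rfl, h j j le_rfl]⟩
  · rintro ⟨hlower, hdiag⟩
    rcases isEmpty_or_nonempty (Fin m) with hm | ⟨⟨i₀⟩⟩
    · exact ⟨0, fun i => isEmptyElim i⟩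
    · refine ⟨C i₀ i₀, fun i j hij => ?_⟩
      rcases (Nat.lt_succ_iff.1 hij).lt_or_eq with h | h
      · simp [hlower i j h, one_apply_ne (Fin.ne_of_lt h)]
      · obtain rfl := Fin.ext h
        simp [hdiag i i₀]

theorem exp_sub_one_sub_mem_belowSubdiag [Ring R] [Algebra ℚ R] [TopologicalSpace R]
    [IsTopologicalRing R] {d : ℕ} {M : Matrix (Fin m) (Fin m) R}
    (hM : M ∈ belowSubdiag R m d) (hd : 0 < d) :
    exp M - 1 - M ∈ belowSubdiag R m (2 * d) := by
  have hnil : M ^ (m + 2) = 0 :=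
    pow_eq_zero_of_le (by omega) (pow_eq_zero_of_mem_belowSubdiag hM hd)
  rw [exp_eq_sum_range_of_pow_eq_zero hnil, sum_range_succ', sum_range_succ']
  simp only [zero_add, Nat.factorial_zero, Nat.factorial_one, Nat.cast_one, inv_one, one_smul,
    pow_zero, pow_one, add_sub_cancel_right]
  refine Submodule.sum_mem _ fun k _ => Submodule.smul_of_tower_mem _ _ ?_
  exact belowSubdiag_antitone (by nlinarith) (pow_mem_belowSubdiag hM _)

theorem exists_mem_belowSubdiag_exp_eq_one_add [NormedRing R] [NormedAlgebra ℚ R]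
    [CompleteSpace R] {d : ℕ} (hd : 0 < d) {M : Matrix (Fin m) (Fin m) R}
    (hM : M ∈ belowSubdiag R m d) :
    ∃ L ∈ belowSubdiag R m d, (∀ X, Commute X M → Commute X L) ∧ exp L = 1 + M := by
  obtain ⟨n, hn⟩ : ∃ n, m ≤ d + n := ⟨m, by omega⟩
  induction n generalizing d M with
  | zero =>
    obtain rfl := eq_zero_of_mem_belowSubdiag hM (by omega)
    exact ⟨0, zero_mem _, fun X _ => Commute.zero_right X, by simp⟩
  | succ n ih =>
    -- `1 + M = exp M * (1 + r)` with `r` of higher order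
    set r := exp (-M) * (1 + M) - 1 with hr_def
    have hr : r ∈ belowSubdiag R m (d + 1) := by
      have h1M : 1 + M ∈ belowSubdiag R m 0 :=
        add_mem one_mem_belowSubdiag_zero (belowSubdiag_antitone (Nat.zero_le d) hM)
      have hs := exp_sub_one_sub_mem_belowSubdiag (neg_mem hM) hd
      rw [show r = (exp (-M) - 1 - -M) * (1 + M) - M * M by rw [hr_def]; noncomm_ring]
      refine belowSubdiag_antitone (show d + 1 ≤ 2 * d by omega) (sub_mem ?_ ?_)
      · simpa using mul_mem_belowSubdiag hs h1M
      · simpa [two_mul] using mul_mem_belowSubdiag hM hM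
    have hr_comm : ∀ X, Commute X M → Commute X r := fun X hX =>
      ((hX.neg_right.exp_right).mul_right ((Commute.one_right X).add_right hX)).sub_right
        (Commute.one_right X)
    obtain ⟨L, hL, hL_comm, hL_exp⟩ := ih (by omega) hr (by omega)
    refine ⟨M + L, add_mem hM (belowSubdiag_antitone (by omega) hL),
      fun X hX => hX.add_right (hL_comm X (hr_comm X hX)), ?_⟩
    rw [exp_add_of_commute _ _ (hL_comm M (hr_comm M (Commute.refl M))), hL_exp, hr_def,
      add_sub_cancel, ← mul_assoc, ← exp_add_of_commute _ _ (Commute.neg_right (.refl M)),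
      add_neg_cancel, exp_zero, one_mul]

theorem exp_smul_one [NormedRing R] [NormedAlgebra ℚ R] [CompleteSpace R] (c : R) :
    exp (c • (1 : Matrix (Fin m) (Fin m) R)) = exp c • 1 := by
  rw [smul_one_eq_diagonal, exp_diagonal, Pi.exp_def, ← smul_one_eq_diagonal]

theorem exp_sub_smul_one_mem_belowSubdiag_one [NormedCommRing R] [NormedAlgebra ℚ R]
    [CompleteSpace R] {C : Matrix (Fin m) (Fin m) R} {c : R}
    (hC : C - c • 1 ∈ belowSubdiag R m 1) : exp C - exp c • 1 ∈ belowSubdiag R m 1 := by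
  set N := C - c • 1
  have hexp : exp C = exp c • exp N := by
    rw [← add_sub_cancel (c • 1) C, exp_add_of_commute _ _ ((Commute.one_left N).smul_left c),
      exp_smul_one, smul_one_mul]
  have h2 := exp_sub_one_sub_mem_belowSubdiag hC one_pos
  rw [hexp, ← smul_sub]
  refine Submodule.smul_mem _ _ ?_
  simpa using add_mem (belowSubdiag_antitone (by norm_num) h2) hC

theorem exists_exp_eq_of_sub_smul_one_mem {C : Matrix (Fin m) (Fin m) ℂ} {c : ℂ} (hc : c ≠ 0)
    (hC : C - c • 1 ∈ belowSubdiag ℂ m 1) :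
    ∃ A, A - Complex.log c • 1 ∈ belowSubdiag ℂ m 1 ∧ exp A = C := by
  obtain ⟨L, hL, -, hL_exp⟩ :=
    exists_mem_belowSubdiag_exp_eq_one_add one_pos (Submodule.smul_mem _ c⁻¹ hC)
  refine ⟨Complex.log c • 1 + L, by simpa using hL, ?_⟩
  rw [exp_add_of_commute _ _ ((Commute.one_left L).smul_left _), exp_smul_one, hL_exp,
    ← Complex.exp_eq_exp_ℂ, Complex.exp_log hc, smul_one_mul, smul_add, smul_smul,
    mul_inv_cancel₀ hc, one_smul, add_sub_cancel]

end Matrix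

theorem memS_iff_exists_leftMulMatrix {b : Matrix (Fin 2) (Fin 2) ℝ} :
    MemS b ↔ ∃ z : ℂ, Algebra.leftMulMatrix Complex.basisOneI z = b := by
  simp only [Algebra.leftMulMatrix_complex]
  constructor
  · rintro ⟨h00, h10⟩
    refine ⟨⟨b 0 0, b 1 0⟩, ext fun i j => ?_⟩
    fin_cases i <;> fin_cases j <;> simp [h00, h10]
  · rintro ⟨z, rfl⟩
    simp [MemS]

noncomputable def realBlock (m : ℕ) :
    Matrix (Fin m) (Fin m) ℂ →ₐ[ℝ] Matrix (Fin m × Fin 2) (Fin m × Fin 2) ℝ :=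
  (compAlgEquiv (Fin m) (Fin 2) ℝ ℝ).toAlgHom.comp
    (Algebra.leftMulMatrix Complex.basisOneI).mapMatrix

section realBlock

variable {m : ℕ}

theorem blk_realBlock (C : Matrix (Fin m) (Fin m) ℂ) (i j : Fin m) :
    blk (realBlock m C) i j = Algebra.leftMulMatrix Complex.basisOneI (C i j) :=
  rfl

theorem exp_realBlock (C : Matrix (Fin m) (Fin m) ℂ) :
    exp (realBlock m C) = realBlock m (exp C) :=
  open scoped Norms.Operator in
  (map_exp (realBlock m) (realBlock m).toLinearMap.continuous_of_finiteDimensional C).symm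

theorem exists_realBlock_eq_of_memB {B : Matrix (Fin m × Fin 2) (Fin m × Fin 2) ℝ}
    (hB : MemB B) : ∃ C, realBlock m C = B := by
  choose z hz using fun i j => memS_iff_exists_leftMulMatrix.1 (hB.1 i j)
  exact ⟨of z, ext fun ⟨i, a⟩ ⟨j, b⟩ => congrFun₂ (hz i j) a b⟩

theorem memB_realBlock_iff {C : Matrix (Fin m) (Fin m) ℂ} :
    MemB (realBlock m C) ↔ ∃ c : ℂ, C - c • 1 ∈ belowSubdiag ℂ m 1 := by
  have hinj := Algebra.leftMulMatrix_injective Complex.basisOneI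
  simp only [exists_sub_smul_one_mem_belowSubdiag_one_iff, MemB, blk_realBlock,
    memS_iff_exists_leftMulMatrix, exists_apply_eq_apply, implies_true, true_and,
    ← map_zero (Algebra.leftMulMatrix Complex.basisOneI), hinj.eq_iff]

theorem memB_iff {B : Matrix (Fin m × Fin 2) (Fin m × Fin 2) ℝ} :
    MemB B ↔ ∃ C : Matrix (Fin m) (Fin m) ℂ, realBlock m C = B ∧
      ∃ c : ℂ, C - c • 1 ∈ belowSubdiag ℂ m 1 := by
  refine ⟨fun hB => ?_, fun ⟨C, hCB, hC⟩ => hCB ▸ memB_realBlock_iff.2 hC⟩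
  obtain ⟨C, rfl⟩ := exists_realBlock_eq_of_memB hB
  exact ⟨C, rfl, memB_realBlock_iff.1 hB⟩

end realBlock

/-- Appendix (iii): `exp(𝔹_m(ℝ)) = 𝔹_m^*(ℝ) = 𝔹_m(ℝ) ∩ GL(2m, ℝ)`. -/
theorem exp_image_B_eq_B_star (m : ℕ) :
    exp '' {B : Matrix (Fin m × Fin 2) (Fin m × Fin 2) ℝ | MemB B} =
      {B : Matrix (Fin m × Fin 2) (Fin m × Fin 2) ℝ | MemB B ∧ IsUnit B} := by
  ext B
  constructor
  · rintro ⟨A, hA, rfl⟩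
    obtain ⟨C, rfl, c, hC⟩ := memB_iff.1 hA
    exact ⟨memB_iff.2 ⟨exp C, (exp_realBlock C).symm, exp c,
      exp_sub_smul_one_mem_belowSubdiag_one hC⟩, isUnit_exp _⟩
  · rintro ⟨hB, hunit⟩
    obtain ⟨C, rfl, c, hC⟩ := memB_iff.1 hB
    rcases eq_or_ne c 0 with rfl | hc
    · -- only possible for `m = 0`: `realBlock m C` is a nilpotent unit
      have hnil : IsNilpotent (realBlock m C) :=
        ⟨m, by rw [← map_pow, pow_eq_zero_of_mem_belowSubdiag (by simpa using hC) one_pos,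
          map_zero]⟩
      have : Subsingleton (Matrix (Fin m × Fin 2) (Fin m × Fin 2) ℝ) :=
        not_nontrivial_iff_subsingleton.1 fun _ => hnil.not_isUnit hunit
      exact ⟨0, memB_iff.2 ⟨0, map_zero _, 0, by simp⟩, Subsingleton.elim _ _⟩
    · obtain ⟨A, hA, rfl⟩ := exists_exp_eq_of_sub_smul_one_mem hc hC
      exact ⟨realBlock m A, memB_iff.2 ⟨A, rfl, _, hA⟩, exp_realBlock A⟩
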